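/- (i) If M is in β-normal form and λ_l(M) = ε then M is not a lambda abstraction. (ii) If M is in quasi normal form with λ_l(M) = ε and M has a β-normal form, then the β-normal form of M is not a lambda abstraction. -/

import Mathlib

set_option maxHeartbeats 1000000

namespace ULC

/-- Variable names. -/
abbrev Name := Nat
/-- Positions (directed paths) in trees / terms. -/
abbrev Pos := List Nat

/-! ## Untyped lambda terms `Λ ::= x | (Λ Λ) | λx.Λ` -/

inductive Term where
  | var : Name → Term
  | app : Term → Term → Term
  | lam : Name → Term → Term
deriving DecidableEq

namespace Term

/-- Free variables of a term. -/
def fv : Term → List Name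
  | var x => [x]
  | app u v => fv u ++ fv v
  | lam x u => (fv u).filter (· != x)

def size : Term → Nat
  | var _ => 1
  | app u v => size u + size v + 1
  | lam _ u => size u + 1

/-- Naive renaming of a free variable (used only with a fresh target). -/
def rename (y z : Name) : Term → Term
  | var w => var (if w = y then z else w)
  | app u v => app (rename y z u) (rename y z v)
  | lam w u => if w = y then lam w u else lam w (rename y z u)

theorem size_rename (y z : Name) : ∀ t : Term, (t.rename y z).size = t.size := by
  intro t
  induction t with
  | var w => simp [rename, size]
  | app u v ihu ihv => simp [rename, size, ihu, ihv]
  | lam w u ih => by_cases h : w = y <;> simp [rename, size, h, ih]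

/-- A name fresh for a given list of names. -/
def fresh (l : List Name) : Name := l.foldr max 0 + 1

/-- Capture-avoiding substitution `subst x s t = t[x := s]`. -/
def subst (x : Name) (s : Term) : Term → Term
  | var y => if y = x then s else var y
  | app u v => app (subst x s u) (subst x s v)
  | lam y u =>
      if y = x then lam y u
      else if y ∈ s.fv ∧ x ∈ u.fv then
        let z := fresh (s.fv ++ u.fv ++ [x, y])
        lam z (subst x s (u.rename y z))
      else lam y (subst x s u)
termination_by t => t.size
decreasing_by
  all_goals simp only [size, size_rename]
  all_goals omega

end Term

/-! ## Beta reduction, alpha conversion -/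

/-- One step of β-reduction. -/
inductive Beta : Term → Term → Prop where
  | redex (x : Name) (u v : Term) :
      Beta (.app (.lam x u) v) (Term.subst x v u)
  | appL {u u' : Term} (v : Term) : Beta u u' → Beta (.app u v) (.app u' v)
  | appR (u : Term) {v v' : Term} : Beta v v' → Beta (.app u v) (.app u v')
  | lamC (x : Name) {u u' : Term} : Beta u u' → Beta (.lam x u) (.lam x u')

/-- α-equivalence. -/
inductive Alpha : Term → Term → Prop where
  | var (x : Name) : Alpha (.var x) (.var x)
  | app {u u' v v' : Term} :
      Alpha u u' → Alpha v v' → Alpha (.app u v) (.app u' v')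
  | lam {x y : Name} {u u' : Term} :
      (∀ z, z ∉ u.fv → z ∉ u'.fv → Alpha (u.rename x z) (u'.rename y z)) →
      Alpha (.lam x u) (.lam y u')

/-- Many-step β-reduction. -/
def BetaStar : Term → Term → Prop := Relation.ReflTransGen Beta

/-- β-equivalence (as usual in the named λ-calculus, modulo α-conversion). -/
def BetaEq : Term → Term → Prop :=
  Relation.EqvGen (fun a b => Beta a b ∨ Alpha a b)

/-- β-normal form: no redex, i.e. no β-step possible. -/
def IsBetaNormal (t : Term) : Prop := ∀ u, ¬ Beta t u

/-- `t` has a β-normal form. -/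
def HasBnf (t : Term) : Prop := ∃ n, BetaStar t n ∧ IsBetaNormal n

/-! ## Head lambda-list, generalized redexes, lloc -/

namespace Term

/-- The head lambda-list `λ_l`. -/
def lamList : Term → List Name
  | var _ => []
  | lam x u => x :: lamList u
  | app u _ => (lamList u).tail

/-- Subterm at a position (0 = under a λ or operator of an app, 1 = operand). -/
def subtermAt : Term → Pos → Option Term
  | t, [] => some t
  | lam _ u, 0 :: p => subtermAt u p
  | app u _, 0 :: p => subtermAt u p
  | app _ v, 1 :: p => subtermAt v p
  | _, _ => none

/-- Replace the subterm at a position. -/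
def replaceAt : Term → Pos → Term → Term
  | _, [], s => s
  | lam x u, 0 :: p, s => lam x (replaceAt u p s)
  | app u v, 0 :: p, s => app (replaceAt u p s) v
  | app u v, 1 :: p, s => app u (replaceAt v p s)
  | t, _, _ => t

/-- Positions of the abstractions listed in the head lambda-list. -/
def lamListPos : Term → List Pos
  | var _ => []
  | lam _ u => ([] : Pos) :: (lamListPos u).map (fun q => 0 :: q)
  | app u _ => ((lamListPos u).map (fun q => 0 :: q)).tail

/-- Generalized redexes: pairs (position of the λ-abstraction occurrence,
position of its argument). -/
def gr : Term → List (Pos × Pos)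
  | var _ => []
  | lam _ u => (gr u).map (fun r => (0 :: r.1, 0 :: r.2))
  | app u v =>
      (match lamListPos u with
        | [] => []
        | q :: _ => [((0 :: q : Pos), ([1] : Pos))]) ++
      (gr u).map (fun r => (0 :: r.1, 0 :: r.2)) ++
      (gr v).map (fun r => (1 :: r.1, 1 :: r.2))

/-- Position of the binder of the variable occurrence at `p` (if bound). -/
def binderAux : Term → Pos → Pos → List (Name × Pos) → Option Pos
  | var x, [], _, env => env.lookup x
  | lam y u, 0 :: p, cur, env => binderAux u p (cur ++ [0]) ((y, cur) :: env)
  | app u _, 0 :: p, cur, env => binderAux u p (cur ++ [0]) env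
  | app _ v, 1 :: p, cur, env => binderAux v p (cur ++ [1]) env
  | _, _, _, _ => none

def binderOf (M : Term) (p : Pos) : Option Pos := binderAux M p [] []

/-- The variable occurrence at `p` is involved in a generalized redex of `M`. -/
def involvedB (M : Term) (p : Pos) : Bool :=
  M.gr.any (fun r => binderOf M p == some r.1)

def Involved (M : Term) (p : Pos) : Prop := involvedB M p = true

/-- The leftmost linear occurrence `lloc`. -/
def llocAux (M : Term) : Term → Pos → Option Pos
  | var _, p => if involvedB M p then some p else none
  | lam _ u, p => llocAux M u (p ++ [0])
  | app u v, p =>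
      match llocAux M u (p ++ [0]) with
      | some q => some q
      | none => if u.lamList = [] then llocAux M v (p ++ [1]) else none

def lloc (M : Term) : Option Pos := llocAux M M []

end Term

/-- Quasi normal form: no leftmost linear occurrence. -/
def Qnf (M : Term) : Prop := M.lloc = none

/-- Names bound somewhere in the term. -/
def Term.bndrs : Term → List Name
  | .var _ => []
  | .app u v => u.bndrs ++ v.bndrs
  | .lam x u => x :: u.bndrs

/-- Barendregt convention: binder names are pairwise distinct and disjoint
from the free names. -/
def Barendregt (M : Term) : Prop :=
  M.bndrs.Nodup ∧ ∀ x ∈ M.bndrs, x ∉ M.fv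

/-- One step of leftmost linear reduction: linearly fire the generalized
redex involving the lloc (working up to α-conversion, which realizes the
capture-avoiding renaming). -/
def LinStep (M N : Term) : Prop :=
  ∃ M', Alpha M M' ∧ Barendregt M' ∧
    ∃ p lp ap A, M'.lloc = some p ∧ Term.binderOf M' p = some lp ∧
      (lp, ap) ∈ M'.gr ∧ Term.subtermAt M' ap = some A ∧
      Alpha N (Term.replaceAt M' p A)

/-- Firing a trivial redex `(λx.u)A` with `x ∉ fv u`. -/
def TrivStep (M N : Term) : Prop :=
  ∃ p x u A, Term.subtermAt M p = some (.app (.lam x u) A) ∧ x ∉ u.fv ∧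
    N = Term.replaceAt M p u

def IsRedexAt (M : Term) (p : Pos) : Prop :=
  ∃ x u A, Term.subtermAt M p = some (.app (.lam x u) A)

def HasRedex (M : Term) : Prop := ∃ p, IsRedexAt M p

/-- `q` occurs (strictly) to the left of `p`. -/
def PosLeft (q p : Pos) : Prop :=
  (∃ r a b s₁ s₂, q = r ++ a :: s₁ ∧ p = r ++ b :: s₂ ∧ a < b) ∨
  (q ≠ p ∧ q <+: p)

/-- A spinal-innermost redex: a β-redex whose operator body has no redex. -/
def SpinalInnermostAt (M : Term) (p : Pos) : Prop :=
  ∃ x u A, Term.subtermAt M p = some (.app (.lam x u) A) ∧ ¬ HasRedex u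

/-- The leftmost spinal-innermost redex of `M` is at `p`. -/
def LSIAt (M : Term) (p : Pos) : Prop :=
  SpinalInnermostAt M p ∧ ∀ q, SpinalInnermostAt M q → ¬ PosLeft q p

/-- One step of the leftmost spinal-innermost reduction strategy. -/
def LSIStep (M N : Term) : Prop :=
  ∃ p x u A, LSIAt M p ∧ Term.subtermAt M p = some (.app (.lam x u) A) ∧
    N = Term.replaceAt M p (Term.subst x A u)

/-! ## Head occurrence, hoc arguments, head reduction -/

/-- Position of the head (leftmost) variable occurrence. -/
def Term.hocPos : Term → Pos
  | .var _ => []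
  | .lam _ u => 0 :: u.hocPos
  | .app u _ => 0 :: u.hocPos

/-- Quasi-head-normal form: the hoc is not involved in a generalized redex. -/
def Qhnf (M : Term) : Prop := ¬ Term.Involved M M.hocPos

/-- The arguments of the head variable occurrence. -/
def Term.args : Term → List Term
  | .var _ => []
  | .lam _ u => u.args
  | .app u v => if u.lamList = [] then u.args ++ [v] else u.args

def Term.headIsVar : Term → Prop
  | .var _ => True
  | .app u _ => u.headIsVar
  | .lam _ _ => False

/-- Head normal form `λ x₁…xₙ. y A₁ … A_m`. -/
def IsHnf : Term → Prop
  | .var _ => True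
  | .app u _ => u.headIsVar
  | .lam _ u => IsHnf u

/-- One step of head reduction. -/
inductive HeadStep : Term → Term → Prop where
  | redex (x : Name) (u v : Term) :
      HeadStep (.app (.lam x u) v) (Term.subst x v u)
  | lamC (x : Name) {u u' : Term} : HeadStep u u' → HeadStep (.lam x u) (.lam x u')
  | appL {u u' : Term} (v : Term) :
      (∀ y w, u ≠ .lam y w) → HeadStep u u' → HeadStep (.app u v) (.app u' v)

/-- Number of arguments applied to the head variable. -/
def Term.headArgCount : Term → Nat
  | .var _ => 0
  | .lam _ u => u.headArgCount
  | .app u _ => u.headArgCount + 1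

/-! ## Simple types and eta-long forms -/

inductive Ty where
  | base : Ty
  | arrow : Ty → Ty → Ty
deriving DecidableEq

mutual
/-- `ELong Γ M A`: `M` is a simply-typed term in η-long form of type `A`. -/
inductive ELong : List (Name × Ty) → Term → Ty → Prop where
  | arrow {Γ x A B U} : ELong ((x, A) :: Γ) U B → ELong Γ (.lam x U) (.arrow A B)
  | base {Γ M} : ESpine Γ M .base → ELong Γ M .base

/-- Spines: a head (variable or abstraction) applied to η-long arguments. -/
inductive ESpine : List (Name × Ty) → Term → Ty → Prop where
  | var {Γ x A} : Γ.lookup x = some A → ESpine Γ (.var x) A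
  | head {Γ x U A B} : ELong Γ (.lam x U) (.arrow A B) → ESpine Γ (.lam x U) (.arrow A B)
  | app {Γ U V A B} : ESpine Γ U (.arrow A B) → ELong Γ V A → ESpine Γ (.app U V) B
end

/-! ## Computation trees -/

/-- Node kinds of the computation tree. -/
inductive NKind where
  | lam | var | app
deriving DecidableEq

/-- Node labels of the computation tree. -/
inductive NLabel where
  | lam : List Name → NLabel
  | var : Name → NLabel
  | app : NLabel
deriving DecidableEq

/-- Computation trees: bulk λ-nodes (with one child), variable nodes (with
λ-node children) and @-nodes (operator + operand λ-node children). -/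
inductive CT where
  | lam : List Name → CT → CT
  | var : Name → List CT → CT
  | app : CT → List CT → CT

instance : Inhabited CT := ⟨.var 0 []⟩

namespace CT

def kind : CT → NKind
  | .lam _ _ => .lam
  | .var _ _ => .var
  | .app _ _ => .app

def labelOf : CT → NLabel
  | .lam xs _ => .lam xs
  | .var z _ => .var z
  | .app _ _ => .app

/-- Arity of a node: number of bound variables / children / operands. -/
def arity : CT → Nat
  | .lam xs _ => xs.length
  | .var _ cs => cs.length
  | .app _ cs => cs.length

/-- The subtree rooted at a given path.  A λ-node's unique child has index 1;
the operator of an @-node has index 0 and its operands indices 1,…; the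
children of a variable node have indices 1,…. -/
def nodeAt : CT → Pos → Option CT
  | t, [] => some t
  | .lam _ c, 1 :: p => nodeAt c p
  | .var _ cs, (k + 1) :: p =>
      match cs[k]? with
      | some c => nodeAt c p
      | none => none
  | .app op _, 0 :: p => nodeAt op p
  | .app _ cs, (k + 1) :: p =>
      match cs[k]? with
      | some c => nodeAt c p
      | none => none
  | _, _ => none

end CT

mutual
def namesCT : CT → List Name
  | .lam xs c => xs ++ namesCT c
  | .var z cs => z :: namesL cs
  | .app op cs => namesCT op ++ namesL cs
def namesL : List CT → List Name
  | [] => []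
  | c :: cs => namesCT c ++ namesL cs
end

mutual
def freeNamesCT : CT → List Name
  | .lam xs c => (freeNamesCT c).filter (fun z => ! xs.contains z)
  | .var z cs => z :: freeNamesL cs
  | .app op cs => freeNamesCT op ++ freeNamesL cs
def freeNamesL : List CT → List Name
  | [] => []
  | c :: cs => freeNamesCT c ++ freeNamesL cs
end

/-- Canonical enumeration of the free variables of the tree. -/
def freeListCT (T : CT) : List Name := (freeNamesCT T).dedup

/-! ### The computation tree of a term -/

mutual
/-- The body node (variable or @) of the computation tree of a term. -/
def ctreeB : Term → CT
  | .var z => .var z []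
  | .lam x u =>
      .app (match ctreeL u with
            | .lam xs c => CT.lam (x :: xs) c
            | c => CT.lam [x] c) []
  | .app u v =>
      match ctreeB u with
      | .var z cts => .var z (cts ++ [ctreeL v])
      | .app op cts => .app op (cts ++ [ctreeL v])
      | c => c
termination_by t => 2 * t.size
decreasing_by all_goals (simp only [Term.size]; omega)
/-- The computation tree of a term (rooted at a bulk λ-node). -/
def ctreeL : Term → CT
  | .lam x u =>
      match ctreeL u with
      | .lam xs c => .lam (x :: xs) c
      | c => .lam [x] c
  | .var z => .lam [] (.var z [])
  | .app u v => .lam [] (ctreeB (.app u v))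
termination_by t => 2 * t.size + 1
decreasing_by all_goals (simp only [Term.size]; omega)
end

def ctree (M : Term) : CT := ctreeL M

/-! ### Binders in the computation tree -/

/-- `binderGo` walks a path maintaining the binding environment; returns the
(binder position, binding index) of the variable node at the end of the path. -/
def binderGo : CT → Pos → Pos → List (Name × (Pos × Nat)) → Option (Pos × Nat)
  | .var z _, [], _, env => env.lookup z
  | .lam xs c, 1 :: p, cur, env =>
      binderGo c p (cur ++ [1])
        ((((xs.zipIdx.map Prod.swap).map (fun e => (e.2, (cur, e.1 + 1)))).reverse) ++ env)
  | .var _ cs, (k + 1) :: p, cur, env =>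
      match cs[k]? with
      | some c => binderGo c p (cur ++ [k + 1]) env
      | none => none
  | .app op _, 0 :: p, cur, env => binderGo op p (cur ++ [0]) env
  | .app _ cs, (k + 1) :: p, cur, env =>
      match cs[k]? with
      | some c => binderGo c p (cur ++ [k + 1]) env
      | none => none
  | _, _, _, _ => none

/-- Binder (with binding index) of a variable node in the computation tree. -/
def binderInCT (T : CT) (q : Pos) : Option (Pos × Nat) := binderGo T q [] []

/-! ### Generalized redexes at the level of computation trees -/

def seqPre (k : Nat) (l : List (Pos × Nat)) : List (Pos × Nat) :=
  l.map (fun s => (k :: s.1, s.2))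

/-- The slots (binder position, binding index) of the head lambda-list. -/
def ctLamSlots : CT → List (Pos × Nat)
  | .lam xs c =>
      (List.range xs.length).map (fun j => (([] : Pos), j + 1))
        ++ seqPre 1 (ctLamSlots c)
  | .var _ _ => []
  | .app op cs => (seqPre 0 (ctLamSlots op)).drop cs.length

def preRedex (k : Nat) (l : List ((Pos × Nat) × (Pos × Nat))) :
    List ((Pos × Nat) × (Pos × Nat)) :=
  l.map (fun r => ((k :: r.1.1, r.1.2), (k :: r.2.1, r.2.2)))

mutual
/-- Generalized redexes of a computation tree: pairs of a lambda slot
(binder position, binding index) and an argument (position of the @-node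
where it is consumed, operand index). -/
def ctGr : CT → List ((Pos × Nat) × (Pos × Nat))
  | .lam _ c => preRedex 1 (ctGr c)
  | .var _ cs => ctGrL 1 cs
  | .app op cs =>
      ((((seqPre 0 (ctLamSlots op)).take cs.length).zipIdx.map Prod.swap).map
        (fun e => (e.2, (([] : Pos), e.1 + 1))))
      ++ preRedex 0 (ctGr op) ++ ctGrL 1 cs
def ctGrL : Nat → List CT → List ((Pos × Nat) × (Pos × Nat))
  | _, [] => []
  | k, c :: cs => preRedex k (ctGr c) ++ ctGrL (k + 1) cs
end

/-- The variable node at `q` is involved in a generalized redex of `T`. -/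
def involvedCT (T : CT) (q : Pos) : Bool :=
  match binderInCT T q with
  | some bi => (ctGr T).any (fun r => r.1 == bi)
  | none => false

/-- Length of the head lambda-list of (the term denoted by) a tree. -/
def ctLamLen : CT → Nat
  | .lam xs c => xs.length + ctLamLen c
  | .var _ _ => 0
  | .app op cs => ctLamLen op - cs.length

mutual
/-- The lloc of the subtree `t` of `T` located at absolute position `q`
(involvement is computed with respect to the whole tree `T`). -/
def llocCT (T : CT) : CT → Pos → Option Pos
  | .lam _ c, q => llocCT T c (q ++ [1])
  | .var _ cs, q =>
      if involvedCT T q then some q else llocArgs T cs q 0 1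
  | .app op cs, q =>
      match llocCT T op (q ++ [0]) with
      | some r => some r
      | none => llocArgs T cs q (ctLamLen op) 1
def llocArgs (T : CT) : List CT → Pos → Nat → Nat → Option Pos
  | [], _, _, _ => none
  | a :: rest, q, l, k =>
      if l = 0 then
        match llocCT T a (q ++ [k]) with
        | some r => some r
        | none => llocArgs T rest q 0 (k + 1)
      else llocArgs T rest q (l - 1) (k + 1)
end

/-- The lloc of the subterm rooted at node `p` of the tree `T`. -/
def llocNode (T : CT) (p : Pos) : Option Pos :=
  match T.nodeAt p with
  | some sub => llocCT T sub p
  | none => none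
/-! ## Extended nodes: structural nodes and ghost nodes -/

/-- Extended nodes: structural nodes (paths of the computation tree) and
ghost nodes, determined by their enabler and a label `k` exceeding its arity. -/
inductive ENode where
  | s : Pos → ENode
  | g : ENode → Nat → ENode
deriving DecidableEq

instance : Inhabited ENode := ⟨.s []⟩

def kindAt (T : CT) (p : Pos) : Option NKind := (T.nodeAt p).map CT.kind

def arityAt (T : CT) (p : Pos) : Nat := ((T.nodeAt p).map CT.arity).getD 0

/-- Bound variables of the λ-node at `p`. -/
def boundAt (T : CT) (p : Pos) : List Name :=
  match T.nodeAt p with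
  | some (.lam xs _) => xs
  | _ => []

namespace ENode

/-- Kind of an extended node (ghosts alternate kinds with their enabler). -/
def kindIn (T : CT) : ENode → Option NKind
  | .s p => kindAt T p
  | .g e _ =>
      match e.kindIn T with
      | some .lam => some .var
      | some _ => some .lam
      | none => none

/-- Arity of an extended node (ghost nodes have arity 0). -/
def arityIn (T : CT) : ENode → Nat
  | .s p => arityAt T p
  | .g _ _ => 0

def isGhost : ENode → Bool
  | .s _ => false
  | .g _ _ => true

end ENode

/-- The unique enabler of a structural node: λ-nodes are enabled by their
parent (with the child index as label), variable nodes by their binder (with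
the binding index) or by the root (with a label indexing the free variable
beyond the root's arity); @-nodes have no enabler. -/
def enablerF (T : CT) (p : Pos) : Option (Pos × Nat) :=
  match T.nodeAt p with
  | none => none
  | some (.app _ _) => none
  | some (.lam _ _) =>
      if h : p = [] then none else some (p.dropLast, p.getLast h)
  | some (.var z _) =>
      match binderInCT T p with
      | some b => some b
      | none => some (([] : Pos), arityAt T [] + 1 + (freeListCT T).idxOf z)

/-- Structural enabling relation `bp ⊢_k q`. -/
def EnablesS (T : CT) (bp : Pos) (k : Nat) (q : Pos) : Prop :=
  (q = bp ++ [k] ∧ (T.nodeAt q).isSome = true ∧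
    (kindAt T bp = some .var ∨ kindAt T bp = some .app))
  ∨ (kindAt T q = some .var ∧ binderInCT T q = some (bp, k))
  ∨ (binderInCT T q = none ∧ bp = [] ∧
      ∃ z cs, T.nodeAt q = some (.var z cs) ∧
        k = arityAt T [] + 1 + (freeListCT T).idxOf z)

def extPB (T : CT) : Nat → Pos → Bool
  | 0, _ => false
  | fuel + 1, p =>
      if p = [] then true
      else
        match enablerF T p with
        | none => false
        | some (q, _) => extPB T fuel q

/-- External nodes: hereditarily enabled by the root. -/
def ENode.extIn (T : CT) : ENode → Bool
  | .s p => extPB T (p.length + 1) p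
  | .g e _ => e.extIn T

/-! ## Justified sequences of nodes

A justified sequence is represented as a list of occurrences in **reverse
chronological order** (the head of the list is the last occurrence).  Each
occurrence carries a pointer given by a distance `dist` (`0` = no pointer)
and a label `jlab`, together with a list `pend` of *pending lambdas*. -/

structure Occ where
  node : ENode
  dist : Nat
  jlab : Nat
  pend : List Name
deriving DecidableEq

instance : Inhabited Occ := ⟨⟨.s [], 0, 0, []⟩⟩

/-- The occurrence of the root of the tree. -/
def rootOcc : Occ := ⟨.s [], 0, 0, []⟩

/-- Indices (into the reversed sequence) of the occurrences retained by the
P-view. -/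
def pviewIdx (T : CT) : List Occ → List Nat
  | [] => []
  | o :: s =>
      if o.node.kindIn T = some .lam then
        if o.dist = 0 then [0]
        else 0 :: o.dist :: ((pviewIdx T (s.drop o.dist)).map (fun i => i + o.dist + 1))
      else 0 :: (pviewIdx T s).map (fun i => i + 1)
termination_by s => s.length
decreasing_by
  all_goals simp [List.length_drop]
  all_goals omega

/-- Indices of the occurrences retained by the O-view. -/
def oviewIdx (T : CT) : List Occ → List Nat
  | [] => []
  | o :: s =>
      if o.node.kindIn T = some .lam then 0 :: (oviewIdx T s).map (fun i => i + 1)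
      else
        if o.dist = 0 then [0]
        else 0 :: o.dist :: ((oviewIdx T (s.drop o.dist)).map (fun i => i + o.dist + 1))
termination_by s => s.length
decreasing_by
  all_goals simp [List.length_drop]
  all_goals omega

/-- Extract the subsequence of `s` given by indices (with pending-lambda
data), recomputing justification pointers within the subsequence. -/
def extractK (s : List Occ) (ks : List (Nat × List Name)) (setPend : Bool) :
    List Occ :=
  let idxs := ks.map Prod.fst
  (ks.zipIdx.map Prod.swap).map (fun e =>
    let a := e.1
    let i := e.2.1
    let o := (s[i]?).getD default
    let d :=
      if o.dist = 0 then 0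
      else
        let b := idxs.idxOf (i + o.dist)
        if b < idxs.length ∧ a < b then b - a else 0
    { o with dist := d, pend := if setPend then e.2.2 else o.pend })

/-- The P-view of a justified sequence. -/
def pview (T : CT) (s : List Occ) : List Occ :=
  extractK s ((pviewIdx T s).map (fun i => (i, ([] : List Name)))) false

/-- The O-view of a justified sequence. -/
def oview (T : CT) (s : List Occ) : List Occ :=
  extractK s ((oviewIdx T s).map (fun i => (i, ([] : List Name)))) false

/-- Follow justification pointers from index `i`; returns the index of the
final pointer-less occurrence. -/
def chainEnd (s : List Occ) : Nat → Nat → Option Nat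
  | 0, _ => none
  | fuel + 1, i =>
      match s[i]? with
      | none => none
      | some o => if o.dist = 0 then some i else chainEnd s fuel (i + o.dist)

def herEnd (s : List Occ) (i : Nat) : Option Nat := chainEnd s s.length i

/-- The occurrence at index `i` is hereditarily justified by the root. -/
def HerRoot (s : List Occ) (i : Nat) : Prop :=
  ∃ j o, herEnd s i = some j ∧ s[j]? = some o ∧ o.node = ENode.s []

/-- The occurrence at index `i` is hereditarily justified by an @-node. -/
def HerApp (T : CT) (s : List Occ) (i : Nat) : Prop :=
  ∃ j o, herEnd s i = some j ∧ s[j]? = some o ∧ o.node.kindIn T = some .app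

/-! ## Arity threshold -/

/-- Auxiliary computation of the arity threshold along the last strand. -/
def athZ (T : CT) : List Occ → Int → Int
  | nq :: aq :: rest, acc =>
      if aq.node.extIn T then 0
      else
        max ((nq.node.arityIn T : Int) + acc)
            (athZ T rest (acc + (nq.node.arityIn T : Int) - (aq.node.arityIn T : Int)))
  | _, _ => 0

/-- The arity threshold of a traversal ending with an external variable. -/
def ath (T : CT) (s : List Occ) : Nat := (athZ T s 0).toNat

/-! ## Imaginary traversals (Table 1) and their restrictions -/

/-- Configuration selecting the variants of the traversal rules. -/
structure TravCfg where
  branch : Bool   -- rule IVar restricted to justifier = last occurrence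
  bound : Bool    -- rule IVar label bounded by the arity threshold
  etaVar : Bool   -- eta-expanded subcase of rule Var allowed
  etaIVar : Bool  -- eta-expanded subcase of rule IVar allowed
  ghostLam : Bool -- rule Lam^ghost allowed

/-- The traversal rules (Table 1 of the paper, and its restrictions). -/
inductive TravR (T : CT) (cfg : TravCfg) : List Occ → Prop where
  | root : TravR T cfg [rootOcc]
  | app {s : List Occ} {o : Occ} {p : Pos} :
      TravR T cfg (o :: s) →
      o.node = .s p → kindAt T p = some .app →
      TravR T cfg (⟨.s (p ++ [0]), 1, 0, []⟩ :: o :: s)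
  | lamApp {s : List Occ} {o : Occ} {p : Pos} :
      TravR T cfg (o :: s) →
      o.node = .s p → kindAt T p = some .lam →
      kindAt T (p ++ [1]) = some .app →
      TravR T cfg (⟨.s (p ++ [1]), 0, 0, []⟩ :: o :: s)
  | lamVar {s : List Occ} {o j : Occ} {p bp : Pos} {d k : Nat} :
      TravR T cfg (o :: s) →
      o.node = .s p → kindAt T p = some .lam →
      kindAt T (p ++ [1]) = some .var →
      1 ≤ d → (o :: s)[d - 1]? = some j → j.node = .s bp →
      EnablesS T bp k (p ++ [1]) →
      (d - 1) ∈ pviewIdx T (o :: s) →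
      TravR T cfg (⟨.s (p ++ [1]), d, k, []⟩ :: o :: s)
  | lamGhost {s : List Occ} {gl n a : Occ} :
      cfg.ghostLam = true →
      TravR T cfg (gl :: s) →
      gl.node.isGhost = true → gl.node.kindIn T = some .lam →
      1 ≤ gl.dist → s[gl.dist - 1]? = some n → s[gl.dist]? = some a →
      n.node.kindIn T = some .var → a.node.kindIn T = some .lam →
      TravR T cfg
        (⟨.g a.node (a.node.arityIn T + gl.jlab - n.node.arityIn T),
          gl.dist + 2, a.node.arityIn T + gl.jlab - n.node.arityIn T, []⟩ :: gl :: s)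
  | varC {s : List Occ} {n a m : Occ} {q : Pos} :
      TravR T cfg (n :: s) →
      n.node.kindIn T = some .var →
      HerApp T (n :: s) 0 →
      1 ≤ n.dist → 1 ≤ n.jlab →
      s[n.dist - 1]? = some a → a.node.kindIn T = some .lam →
      s[n.dist]? = some m →
      (m.node.kindIn T = some .var ∨ m.node.kindIn T = some .app) →
      m.node = .s q → n.jlab ≤ arityAt T q →
      TravR T cfg (⟨.s (q ++ [n.jlab]), n.dist + 2, n.jlab, []⟩ :: n :: s)
  | varE {s : List Occ} {n a m : Occ} :
      cfg.etaVar = true →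
      TravR T cfg (n :: s) →
      n.node.kindIn T = some .var →
      HerApp T (n :: s) 0 →
      1 ≤ n.dist → 1 ≤ n.jlab →
      s[n.dist - 1]? = some a → a.node.kindIn T = some .lam →
      s[n.dist]? = some m →
      (m.node.kindIn T = some .var ∨ m.node.kindIn T = some .app) →
      m.node.arityIn T < n.jlab →
      TravR T cfg (⟨.g m.node n.jlab, n.dist + 2, n.jlab, []⟩ :: n :: s)
  | ivarC {s : List Occ} {n m : Occ} {q : Pos} {jm i : Nat} :
      TravR T cfg (n :: s) →
      n.node.kindIn T = some .var →
      (cfg.branch = true → n.node.extIn T = true) →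
      (cfg.branch = false → HerRoot (n :: s) 0) →
      1 ≤ i →
      (n :: s)[jm]? = some m → m.node.kindIn T = some .var →
      jm ∈ oviewIdx T (n :: s) →
      (cfg.branch = true → jm = 0) →
      (cfg.bound = true → i ≤ ath T (n :: s)) →
      m.node = .s q → i ≤ arityAt T q →
      TravR T cfg (⟨.s (q ++ [i]), jm + 1, i, []⟩ :: n :: s)
  | ivarE {s : List Occ} {n m : Occ} {jm i : Nat} :
      cfg.etaIVar = true →
      TravR T cfg (n :: s) →
      n.node.kindIn T = some .var →
      (cfg.branch = true → n.node.extIn T = true) →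
      (cfg.branch = false → HerRoot (n :: s) 0) →
      1 ≤ i →
      (n :: s)[jm]? = some m → m.node.kindIn T = some .var →
      jm ∈ oviewIdx T (n :: s) →
      (cfg.branch = true → jm = 0) →
      (cfg.bound = true → i ≤ ath T (n :: s)) →
      m.node.arityIn T < i →
      TravR T cfg (⟨.g m.node i, jm + 1, i, []⟩ :: n :: s)

/-- Imaginary traversals of the untyped λ-calculus (Table 1). -/
def Trav (T : CT) : List Occ → Prop :=
  TravR T ⟨false, false, true, true, true⟩

/-- Branching traversals: rule IVar points to the last occurrence. -/
def TravB (T : CT) : List Occ → Prop :=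
  TravR T ⟨true, false, true, true, true⟩

/-- Normalizing traversals (Table 2): branching + arity-threshold bound. -/
def TravN (T : CT) : List Occ → Prop :=
  TravR T ⟨true, true, true, true, true⟩

/-- STLC traversals: no ghost rules at all. -/
def TravSTLC (T : CT) : List Occ → Prop :=
  TravR T ⟨false, false, false, false, false⟩

/-- Traversals without the eta-expanded subcase of rule IVar. -/
def TravNoEtaIVar (T : CT) : List Occ → Prop :=
  TravR T ⟨false, false, true, false, true⟩

/-- Chronological prefix of length `n` of an infinite sequence of
occurrences, in reverse representation. -/
def prefixRev (f : Nat → Occ) (n : Nat) : List Occ :=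
  ((List.range n).map f).reverse
/-! ## Justified paths of the computation tree -/

/-- Justified paths: paths of the computation tree from the root, equipped
with the induced justification pointers (bound variables point to their
binder with the binding index, free variables to the root, λ-nodes to their
parent with the child index). -/
inductive JPath (T : CT) : List Occ → Prop where
  | root : JPath T [rootOcc]
  | lam {s : List Occ} {o : Occ} {p : Pos} {k : Nat} :
      JPath T (o :: s) → o.node = .s p →
      (kindAt T p = some .var ∨ kindAt T p = some .app) →
      (T.nodeAt (p ++ [k])).isSome = true → kindAt T (p ++ [k]) = some .lam →
      JPath T (⟨.s (p ++ [k]), 1, k, []⟩ :: o :: s)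
  | appNode {s : List Occ} {o : Occ} {p : Pos} :
      JPath T (o :: s) → o.node = .s p → kindAt T p = some .lam →
      kindAt T (p ++ [1]) = some .app →
      JPath T (⟨.s (p ++ [1]), 0, 0, []⟩ :: o :: s)
  | varNode {s : List Occ} {o j : Occ} {p bp : Pos} {d k : Nat} :
      JPath T (o :: s) → o.node = .s p → kindAt T p = some .lam →
      kindAt T (p ++ [1]) = some .var →
      1 ≤ d → (o :: s)[d - 1]? = some j → j.node = .s bp →
      EnablesS T bp k (p ++ [1]) →
      JPath T (⟨.s (p ++ [1]), d, k, []⟩ :: o :: s)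

/-- Maximal justified paths. -/
def MaxJPath (T : CT) (s : List Occ) : Prop :=
  JPath T s ∧ ∀ o, ¬ JPath T (o :: s)

/-- Label of an occurrence (structural nodes only). -/
def labOf (T : CT) (o : Occ) : Option NLabel :=
  match o.node with
  | .s p => (T.nodeAt p).map CT.labelOf
  | .g _ _ => none

/-! ## Structures of justified sequences -/

/-- The structure of an occurrence: node kind, pointer distance, pointer
label (node labels are forgotten). -/
structure OccStr where
  kind : Option NKind
  dist : Nat
  jlab : Nat
deriving DecidableEq

/-- The structure of a justified sequence. -/
def strOf (T : CT) (s : List Occ) : List OccStr :=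
  s.map (fun o => ⟨o.node.kindIn T, o.dist, o.jlab⟩)

/-! ## Core projection -/

/-- Indices (with pending-lambda relabelling data) retained by the core
projection, computed with a stack `ys` of pending lambdas. -/
def coreIdx (T : CT) : List Occ → List Name → List (Nat × List Name)
  | [], _ => []
  | o :: s, ys =>
      match o.node.kindIn T with
      | some .var =>
          if o.node.extIn T then
            (0, o.pend) :: (coreIdx T s []).map (fun e => (e.1 + 1, e.2))
          else (coreIdx T s (ys.drop (o.node.arityIn T))).map (fun e => (e.1 + 1, e.2))
      | some .app =>
          (coreIdx T s (ys.drop (o.node.arityIn T))).map (fun e => (e.1 + 1, e.2))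
      | some .lam =>
          if o.node.extIn T then
            (0, o.pend ++ ys) :: (coreIdx T s []).map (fun e => (e.1 + 1, e.2))
          else
            match o.node with
            | .s p =>
                (coreIdx T s (boundAt T p ++ o.pend ++ ys)).map (fun e => (e.1 + 1, e.2))
            | .g _ _ => (coreIdx T s (o.pend ++ ys)).map (fun e => (e.1 + 1, e.2))
      | none => (coreIdx T s ys).map (fun e => (e.1 + 1, e.2))

/-- The core of a justified sequence: the subsequence of external occurrences,
with pending lambdas prepended to the labels of external λ-nodes. -/
def core (T : CT) (s : List Occ) : List Occ :=
  extractK s (coreIdx T s []) true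

/-! ## On-the-fly eta-expansion -/

def modArg : List CT → Nat → (CT → CT) → List CT
  | [], _, _ => []
  | c :: cs, 0, f => f c :: cs
  | c :: cs, k + 1, f => c :: modArg cs k f

def CT.modifyAt : CT → Pos → (CT → CT) → CT
  | t, [], f => f t
  | .lam xs c, 1 :: p, f => .lam xs (c.modifyAt p f)
  | .var z cs, (k + 1) :: p, f => .var z (modArg cs k (fun c => c.modifyAt p f))
  | .app op cs, 0 :: p, f => .app (op.modifyAt p f) cs
  | .app op cs, (k + 1) :: p, f => .app op (modArg cs k (fun c => c.modifyAt p f))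
  | t, _, _ => t
termination_by t p _ => p.length
decreasing_by all_goals simp

def freshCT (T : CT) : Name := (namesCT T).foldr max 0 + 1

/-- One eta-expansion step at the variable/@-node `q`: the subterm `N`
rooted at `q` is replaced by `λθ. N θ` for a fresh `θ` (in the computation
tree, `θ` is appended to the bound variables of the parent λ-node and a new
operand `λ⟨θ⟩` is appended to the children of `q`). -/
def etaStep (T : CT) (q : Pos) : CT :=
  let θ := freshCT T
  let T1 := T.modifyAt q (fun n =>
    match n with
    | .var z cs => .var z (cs ++ [.lam [] (.var θ [])])
    | .app op cs => .app op (cs ++ [.lam [] (.var θ [])])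
    | t => t)
  T1.modifyAt q.dropLast (fun n =>
    match n with
    | .lam xs c => .lam (xs ++ [θ]) c
    | t => t)

/-- Process the occurrences of a traversal chronologically, performing an
eta-expansion at the justifier of each ghost λ-node occurrence (the
eta-expanded subcases of rules Var and IVar); `acc` records the materialized
position of each processed occurrence. -/
def etaFoldGo : CT → List Pos → List Occ → CT
  | T, _, [] => T
  | T, acc, o :: os =>
      match o.node with
      | .s p => etaFoldGo T (p :: acc) os
      | .g _ i =>
          if o.node.kindIn T = some .lam then
            let q := acc.getD (o.dist - 1) []
            etaFoldGo (etaStep T q) ((q ++ [i]) :: acc) os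
          else
            let q := acc.getD 0 []
            etaFoldGo T ((q ++ [1]) :: acc) os

/-- The on-the-fly eta-expansion `M^t` of (the computation tree of) a term
with respect to a finite traversal `t`. -/
def etaExpCT (T : CT) (t : List Occ) : CT := etaFoldGo T [] t.reverse

/-- Element-wise, pointer-preserving extension of a map on extended nodes to
justified sequences. -/
def mapOcc (η : ENode → ENode) (s : List Occ) : List Occ :=
  s.map (fun o => { o with node := η o.node })

/-! ## Isomorphisms of sets of justified sequences -/

/-- Structure-preserving bijection between two sets of justified sequences
(over trees `T₁` and `T₂` respectively). -/
def StrIso (T₁ T₂ : CT) (S₁ S₂ : Set (List Occ)) : Prop :=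
  ∃ φ : List Occ → List Occ, Set.BijOn φ S₁ S₂ ∧
    ∀ s ∈ S₁, strOf T₂ (φ s) = strOf T₁ s

/-- The set of cores of normalizing traversals of a term. -/
def CoreSet (M : Term) : Set (List Occ) :=
  {c | ∃ t, TravN (ctree M) t ∧ c = core (ctree M) t}

/-- The set of structures of core P-views of normalizing traversals
(the quotient `Trav^n(M)/∼`, each class identified with the common structure
of the core P-views of its members). -/
def QuotSet (M : Term) : Set (List OccStr) :=
  {x | ∃ t, TravN (ctree M) t ∧
        x = strOf (ctree M) (pview (ctree M) (core (ctree M) t))}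
/-! ## Strands (for the weaving proposition) -/

/-- `n_q` of the last strand: the (var/@)-occurrence at index `2(q-1)` of the
reversed sequence (`q` counted from 1, so `n_1` is the last occurrence). -/
def nOcc (t : List Occ) (q : Nat) : Occ := (t[2 * (q - 1)]?).getD default

/-- `α_q` of the last strand: the λ-occurrence at index `2q - 1`. -/
def aOcc (t : List Occ) (q : Nat) : Occ := (t[2 * q - 1]?).getD default

def nAr (T : CT) (t : List Occ) (q : Nat) : Int := ((nOcc t q).node.arityIn T : Int)
def aAr (T : CT) (t : List Occ) (q : Nat) : Int := ((aOcc t q).node.arityIn T : Int)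

/-- `i_q = i - ∑_{j=1}^{q-1} (|n_j| - |α_j|)`. -/
def iSeq (T : CT) (t : List Occ) (i : Nat) (q : Nat) : Int :=
  (i : Int) - ∑ j ∈ Finset.Ico 1 q, (nAr T t j - aAr T t j)

/-- The last strand of `t` has length `2k`: it starts with an external
λ-node `α_k`, ends with the last occurrence `n_1`, an external variable,
and all the `2k - 2` occurrences in between are internal, alternating
between λ-nodes and variable/@-nodes. -/
def LastStrand (T : CT) (t : List Occ) (k : Nat) : Prop :=
  1 ≤ k ∧ 2 * k ≤ t.length ∧
  (∀ q, 1 ≤ q → q ≤ k →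
    ((nOcc t q).node.kindIn T = some .var ∨ (nOcc t q).node.kindIn T = some .app)) ∧
  (∀ q, 1 ≤ q → q ≤ k → (aOcc t q).node.kindIn T = some .lam) ∧
  (nOcc t 1).node.kindIn T = some .var ∧ (nOcc t 1).node.extIn T = true ∧
  (aOcc t k).node.extIn T = true ∧
  (∀ j, 1 ≤ j → j ≤ 2 * k - 2 → ∀ o, t[j]? = some o → o.node.extIn T = false)

/-! ## Spinal paths (for the generalized redex argument lookup) -/

/-- Position of `@_j` on the spinal descent below the @-node at `a`
(`@_r = a` is the topmost one, `@_1` the lowest). -/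
def atPos (a : Pos) (r j : Nat) : Pos :=
  a ++ (List.replicate (r - j) ([0, 1] : Pos)).flatten

/-- The sequence `i_1 = i`, `i_{j+1} = i_j - |@_j| + |λx̄_{j+1}|` along the
spinal descent. -/
def iSeqL (T : CT) (a : Pos) (r i : Nat) : Nat → Int
  | 0 => (i : Int)
  | 1 => (i : Int)
  | j + 1 =>
      iSeqL T a r i j - (arityAt T (atPos a r j) : Int)
        + (arityAt T (atPos a r (j + 1) ++ [0]) : Int)
end ULC

/-! Call a term guarded when every λ on its spine is applied and its head variable is not
bound by a λ of the spine. This is preserved by β-reduction: contracting a redex on the spine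
substitutes for a variable that is not the head, and only renames spine binders. An abstraction
is never guarded. A quasi normal form with empty head λ-list is guarded: `lloc` visits the head
occurrence first, so it is not bound by the λ of a generalized redex, while an empty head λ-list
makes every λ of the spine the λ of a generalized redex. -/

theorem List.mem_of_lookup_eq_some {α β : Type*} [BEq α] [LawfulBEq α] :
    ∀ {l : List (α × β)} {a : α} {b : β}, l.lookup a = some b → (a, b) ∈ l
  | [], _, _, h => by simp at h
  | (a', b') :: l, a, b, h => by
      by_cases ha : a = a'
      · subst ha
        simp_all [List.lookup]
      · simp only [List.lookup, beq_false_of_ne ha] at h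
        exact List.mem_cons_of_mem _ (List.mem_of_lookup_eq_some h)

theorem List.notMem_map_fst_of_lookup_eq_none {α β : Type*} [BEq α] [LawfulBEq α] :
    ∀ {l : List (α × β)} {a : α}, l.lookup a = none → a ∉ l.map Prod.fst
  | [], _, _ => by simp
  | (a', b') :: l, a, h => by
      by_cases ha : a = a'
      · subst ha
        simp [List.lookup] at h
      · simp only [List.lookup, beq_false_of_ne ha] at h
        simpa [ha] using List.notMem_map_fst_of_lookup_eq_none h

namespace ULC.Term

/-- With `n` arguments pending above `t`, every λ on the spine of `t` receives an argument,
and the head variable of `t` is neither in `bound` nor bound by a λ of the spine. -/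
def GuardedSpine : List Name → Term → ℕ → Prop
  | bound, var x, _ => x ∉ bound
  | bound, app u _, n => GuardedSpine bound u (n + 1)
  | _, lam _ _, 0 => False
  | bound, lam x u, n + 1 => GuardedSpine (x :: bound) u n

theorem GuardedSpine.mono :
    ∀ {t : Term} {n : ℕ} {b₁ b₂ : List Name}, b₂ ⊆ b₁ → GuardedSpine b₁ t n → GuardedSpine b₂ t n
  | var _, _, _, _, h, hs => fun hx => hs (h hx)
  | app _ _, _, _, _, h, hs => GuardedSpine.mono (n := _ + 1) h hs
  | lam _ _, 0, _, _, _, hs => hs.elim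
  | lam _ u, _ + 1, _, _, h, hs => GuardedSpine.mono (t := u) (List.cons_subset_cons _ h) hs

theorem GuardedSpine.cons_of_notMem_fv {z : Name} :
    ∀ {t : Term} {n : ℕ} {bound : List Name}, z ∉ t.fv →
      GuardedSpine bound t n → GuardedSpine (z :: bound) t n
  | var _, _, _, hz, hs => by simp_all [GuardedSpine, fv, eq_comm]
  | app _ _, _, _, hz, hs => GuardedSpine.cons_of_notMem_fv (n := _ + 1)
      (fun h => hz (List.mem_append_left _ h)) hs
  | lam _ _, 0, _, _, hs => hs.elim
  | lam x u, _ + 1, bound, hz, hs => by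
      simp only [GuardedSpine] at hs ⊢
      by_cases hzx : z = x
      · subst hzx
        exact hs.mono (by simp)
      · have hzu : z ∉ u.fv := fun h => hz (by simp [fv, h, hzx])
        exact (GuardedSpine.cons_of_notMem_fv hzu hs).mono (List.Perm.swap _ _ _).subset

theorem GuardedSpine.rename {y z : Name} :
    ∀ {t : Term} {n : ℕ} {bound : List Name}, y ∈ bound →
      GuardedSpine bound t n → GuardedSpine bound (t.rename y z) n
  | var x, _, _, hy, hs => by
      have hxy : x ≠ y := fun h => hs (h ▸ hy)
      simpa [Term.rename, hxy, GuardedSpine] using hs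
  | app _ _, _, _, hy, hs => GuardedSpine.rename (n := _ + 1) hy hs
  | lam _ _, 0, _, _, hs => hs.elim
  | lam x u, _ + 1, _, hy, hs => by
      by_cases hxy : x = y
      · simpa [Term.rename, hxy] using hs
      · simpa [Term.rename, hxy, GuardedSpine] using
          GuardedSpine.rename (List.mem_cons_of_mem _ hy) hs

theorem fresh_notMem (l : List Name) : fresh l ∉ l := by
  have hle : ∀ x ∈ l, x ≤ l.foldr max 0 := by
    induction l with
    | nil => simp
    | cons y l ih => simpa using fun x hx => Or.inr (ih x hx)
  exact fun h => Nat.not_succ_le_self _ (hle _ h)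

theorem GuardedSpine.rename_fresh {y z : Name} {u : Term} {n : ℕ} {bound : List Name}
    (hz : z ∉ u.fv) (hs : GuardedSpine (y :: bound) u n) :
    GuardedSpine (z :: bound) (u.rename y z) n :=
  ((hs.cons_of_notMem_fv hz).rename (by simp)).mono (List.cons_subset_cons _ (by simp))

theorem GuardedSpine.subst (a : Name) (A t : Term) :
    ∀ {bound : List Name} {n : ℕ},
      GuardedSpine (a :: bound) t n → GuardedSpine bound (Term.subst a A t) n := by
  induction t using Term.subst.induct a A with
  | case1 => intro _ _ hs; simp [GuardedSpine] at hs
  | case2 y hya =>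
      intro _ _ hs
      rw [Term.subst, if_neg hya]
      exact hs.mono (by simp)
  | case3 u v ih _ =>
      intro _ n hs
      rw [Term.subst]
      exact ih (n := n + 1) hs
  | case4 u =>
      intro _ n hs
      rw [Term.subst, if_pos rfl]
      cases n with
      | zero => exact hs.elim
      | succ n => exact GuardedSpine.mono (t := u) (by simp) hs
  | case5 y u hya hcap z =>
      rename_i ih
      intro bound n hs
      rw [Term.subst, if_neg hya, if_pos hcap]
      cases n with
      | zero => exact hs.elim
      | succ n =>
        simp only [GuardedSpine] at hs ⊢
        have hz : z ∉ u.fv := fun h =>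
          fresh_notMem _ (List.mem_append_left _ (List.mem_append_right _ h))
        exact ih ((GuardedSpine.rename_fresh hz hs).mono (List.Perm.swap _ _ _).subset)
  | case6 y u hya hcap ih =>
      intro bound n hs
      rw [Term.subst, if_neg hya, if_neg hcap]
      cases n with
      | zero => exact hs.elim
      | succ n => exact ih (GuardedSpine.mono (t := u) (List.Perm.swap _ _ _).subset hs)

theorem GuardedSpine.beta {t t' : Term} (h : Beta t t') :
    ∀ {bound : List Name} {n : ℕ}, GuardedSpine bound t n → GuardedSpine bound t' n := by
  induction h with
  | redex x u v => exact fun hs => GuardedSpine.subst x v u hs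
  | appL v _ ih => exact fun {_ n} hs => ih (n := n + 1) hs
  | appR u _ => exact id
  | lamC x _ ih =>
      intro _ n hs
      cases n with
      | zero => exact hs.elim
      | succ n => exact ih hs

theorem GuardedSpine.betaStar {t t' : Term} {bound : List Name} {n : ℕ} (h : BetaStar t t')
    (hs : GuardedSpine bound t n) : GuardedSpine bound t' n := by
  induction h with
  | refl => exact hs
  | tail _ h ih => exact ih.beta h

theorem length_lamListPos : ∀ t : Term, t.lamListPos.length = t.lamList.length
  | var _ => rfl
  | lam _ u => by simp [lamListPos, lamList, length_lamListPos u]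
  | app u _ => by simp [lamListPos, lamList, length_lamListPos u]

theorem involvedB_hocPos_of_llocAux_eq_none (M : Term) :
    ∀ (t : Term) (p : Pos), llocAux M t p = none → involvedB M (p ++ t.hocPos) = false
  | var _, p, h => by simpa [llocAux, hocPos] using h
  | lam _ u, p, h => by
      simpa [hocPos] using involvedB_hocPos_of_llocAux_eq_none M u (p ++ [0]) h
  | app u _, p, h => by
      simp only [llocAux] at h
      cases hu : llocAux M u (p ++ [0]) with
      | none => simpa [hocPos] using involvedB_hocPos_of_llocAux_eq_none M u (p ++ [0]) hu
      | some _ => simp [hu] at h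

theorem binderAux_hocPos_mem :
    ∀ (t : Term) (cur : Pos) (env : List (Name × Pos)) (b : Pos),
      binderAux t t.hocPos cur env = some b →
      b ∈ env.map Prod.snd ∨ ∃ q ∈ t.lamListPos ++ t.gr.map Prod.fst, b = cur ++ q
  | var x, cur, env, b, h => by
      simp only [hocPos, binderAux] at h
      exact .inl (List.mem_map.2 ⟨(x, b), List.mem_of_lookup_eq_some h, rfl⟩)
  | lam y u, cur, env, b, h => by
      rcases binderAux_hocPos_mem u (cur ++ [0]) ((y, cur) :: env) b h with hb | ⟨q, hq, rfl⟩
      · rcases List.mem_cons.1 hb with rfl | hb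
        · exact .inr ⟨[], by simp [lamListPos]⟩
        · exact .inl hb
      · refine .inr ⟨0 :: q, ?_, by simp⟩
        simp only [List.mem_append, List.mem_map] at hq ⊢
        rcases hq with hq | ⟨r, hr, rfl⟩
        · exact .inl (List.mem_cons_of_mem _ (List.mem_map_of_mem hq))
        · exact .inr ⟨(0 :: r.1, 0 :: r.2), List.mem_map_of_mem hr, rfl⟩
  | app u v, cur, env, b, h => by
      rcases binderAux_hocPos_mem u (cur ++ [0]) env b h with hb | ⟨q, hq, rfl⟩
      · exact .inl hb
      · refine .inr ⟨0 :: q, ?_, by simp⟩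
        simp only [List.mem_append, List.mem_map] at hq ⊢
        rcases hq with hq | ⟨r, hr, rfl⟩
        · cases hu : u.lamListPos with
          | nil => simp [hu] at hq
          | cons q₀ qs =>
            rw [hu, List.mem_cons] at hq
            rcases hq with rfl | hq
            · exact .inr ⟨(0 :: q, [1]), by simp [gr, hu], rfl⟩
            · exact .inl (by simp [lamListPos, hu, hq])
        · exact .inr ⟨(0 :: r.1, 0 :: r.2),
          List.mem_append_left _ (List.mem_append_right _ (List.mem_map_of_mem hr)), rfl⟩

theorem guardedSpine_of_binderAux_hocPos_eq_none :
    ∀ (t : Term) (cur : Pos) (env : List (Name × Pos)) (n : ℕ),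
      binderAux t t.hocPos cur env = none → t.lamList.length ≤ n →
      GuardedSpine (env.map Prod.fst) t n
  | var _, _, _, _, h, _ => List.notMem_map_fst_of_lookup_eq_none h
  | lam y u, cur, env, n, h, hn => by
      obtain ⟨n, rfl⟩ : ∃ m, n = m + 1 := ⟨n - 1, by simp [lamList] at hn; omega⟩
      exact guardedSpine_of_binderAux_hocPos_eq_none u (cur ++ [0]) ((y, cur) :: env) n h
        (by simpa [lamList] using hn)
  | app u _, cur, env, n, h, hn =>
      guardedSpine_of_binderAux_hocPos_eq_none u (cur ++ [0]) env (n + 1) h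
        (by simp [lamList] at hn; omega)

end ULC.Term

namespace ULC

open Term

theorem Qnf.qhnf {M : Term} (hM : Qnf M) : Qhnf M := by
  simpa [Qhnf, Involved] using involvedB_hocPos_of_llocAux_eq_none M M [] hM

theorem Qhnf.binderOf_hocPos_eq_none {M : Term} (hM : Qhnf M) (hl : M.lamList = []) :
    binderOf M M.hocPos = none := by
  cases hb : binderOf M M.hocPos with
  | none => rfl
  | some b =>
    have hpos : M.lamListPos = [] := List.eq_nil_of_length_eq_zero (by simp [length_lamListPos, hl])
    rcases binderAux_hocPos_mem M [] [] b hb with h | ⟨q, hq, rfl⟩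
    · simp at h
    · rw [hpos, List.nil_append, List.mem_map] at hq
      obtain ⟨r, hr, rfl⟩ := hq
      exact absurd (List.any_eq_true.2 ⟨r, hr, by simpa using hb⟩) hM

theorem Qnf.guardedSpine {M : Term} (hM : Qnf M) (hl : M.lamList = []) : GuardedSpine [] M 0 :=
  guardedSpine_of_binderAux_hocPos_eq_none M [] [] 0 (hM.qhnf.binderOf_hocPos_eq_none hl)
    (by simp [hl])

end ULC

namespace Stmt15
open ULC

/-- (i) A β-normal term with empty head lambda-list is not
an abstraction.  (ii) A quasi normal form with empty head lambda-list that
has a β-normal form has a β-normal form which is not an abstraction. -/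
theorem qnf_betanf_not_abstraction (M : Term) :
    (IsBetaNormal M → M.lamList = [] → ∀ x u, M ≠ .lam x u) ∧
    (Qnf M → M.lamList = [] →
      ∀ N, BetaStar M N → IsBetaNormal N → ∀ x u, N ≠ .lam x u) := by
  constructor
  · rintro - hl x u rfl
    simp [Term.lamList] at hl
  · rintro hM hl N hMN - x u rfl
    exact (hM.guardedSpine hl).betaStar hMN

end Stmt15
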